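/- Let q = 3, so λ_3 = 1, I_3 = [−1/2, 1/2], and let f_3 be the Hurwitz–Nakada map. Then for every x ∈ (−1/2, 0): the preimage set {y ∈ I_3∖{0} : f_3(y) = x} equals {−1/(x+n) : n ∈ ℤ, n ≥ 3 or n ≤ −2}; moreover −1/(x+n) ∈ (−1/2, 0) for every n ≥ 3 and −1/(x+n) ∈ (0, 1/2) for every n ≤ −2, while −1/(x+n) ∉ I_3 for n ∈ {1, 2, −1} and −1/x ∉ I_3. -/

import Mathlib

/-!
Since `f₃ y = -1/y - n` with `n ∈ ℤ`, every preimage of `x` has the form `-1/(x + n)`,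
and conversely `⟨x + n⟩ = n` because `x + 1/2 ∈ (0, 1)`. So the preimages of `x` in `I₃ ∖ {0}`
are the points `-1/(x + n)` lying in `I₃`, i.e. those with `|x + n| ≥ 2`; for `x ∈ (-1/2, 0)`
this excludes exactly `n ∈ {-1, 0, 1, 2}`.
-/

/-- The modified floor `⌊t⌋′`: the unique integer `n` with `n < t ≤ n+1` if
`t > 0`, and `n ≤ t < n+1` if `t ≤ 0`. -/
noncomputable def mfloor (t : ℝ) : ℤ := if 0 < t then ⌈t⌉ - 1 else ⌊t⌋

/-- The Hurwitz–Nakada map for `q = 3` (`λ_3 = 1`):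
`f_3(x) = -1/x - ⌊-1/x + 1/2⌋′`, `f_3(0) = 0`. -/
noncomputable def f3 (x : ℝ) : ℝ :=
  if x = 0 then 0 else -1 / x - (mfloor (-1 / x + 1 / 2) : ℝ)

open Set

lemma mfloor_eq_of_lt_of_lt {t : ℝ} {n : ℤ} (h₁ : (n : ℝ) < t) (h₂ : t < n + 1) :
    mfloor t = n := by
  unfold mfloor
  split
  · have hc : ⌈t⌉ = n + 1 := by
      rw [Int.ceil_eq_iff]
      constructor <;> push_cast <;> linarith
    omega
  · rw [Int.floor_eq_iff]
    exact ⟨h₁.le, h₂⟩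

lemma f3_neg_one_div {t : ℝ} (ht : t ≠ 0) : f3 (-1 / t) = t - mfloor (t + 1 / 2) := by
  have hinv : -1 / (-1 / t) = t := by field_simp
  rw [f3, if_neg (by simpa using ht), hinv]

lemma f3_neg_one_div_add_int {x : ℝ} (hx : x ∈ Ioo (-(1 : ℝ) / 2) (1 / 2)) {n : ℤ}
    (hn : x + n ≠ 0) : f3 (-1 / (x + n)) = x := by
  obtain ⟨hx₁, hx₂⟩ := hx
  rw [f3_neg_one_div hn, mfloor_eq_of_lt_of_lt (n := n) (by linarith) (by linarith)]
  ring

lemma eq_neg_one_div_f3_add_mfloor {y : ℝ} (hy : y ≠ 0) :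
    y = -1 / (f3 y + mfloor (-1 / y + 1 / 2)) := by
  rw [f3, if_neg hy, sub_add_cancel]
  field_simp

lemma neg_one_div_mem_Ioo_of_two_lt {s : ℝ} (hs : 2 < s) :
    -1 / s ∈ Ioo (-(1 : ℝ) / 2) 0 := by
  constructor
  · rw [div_lt_div_iff₀ (by norm_num) (by linarith)]
    linarith
  · exact div_neg_of_neg_of_pos (by norm_num) (by linarith)

lemma neg_one_div_mem_Ioo_of_lt_neg_two {s : ℝ} (hs : s < -2) :
    -1 / s ∈ Ioo (0 : ℝ) (1 / 2) := by
  constructor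
  · exact div_pos_of_neg_of_neg (by norm_num) (by linarith)
  · rw [div_lt_iff_of_neg (by linarith)]
    linarith

lemma neg_one_div_add_int_mem_Ioo_of_three_le {x : ℝ} (hx : -(1 : ℝ) / 2 < x) {n : ℤ}
    (hn : 3 ≤ n) : -1 / (x + n) ∈ Ioo (-(1 : ℝ) / 2) 0 := by
  have hn' : (3 : ℝ) ≤ n := by exact_mod_cast hn
  exact neg_one_div_mem_Ioo_of_two_lt (by linarith)

lemma neg_one_div_add_int_mem_Ioo_of_le_neg_two {x : ℝ} (hx : x < 0) {n : ℤ}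
    (hn : n ≤ -2) : -1 / (x + n) ∈ Ioo (0 : ℝ) (1 / 2) := by
  have hn' : (n : ℝ) ≤ -2 := by exact_mod_cast hn
  exact neg_one_div_mem_Ioo_of_lt_neg_two (by linarith)

lemma neg_one_div_notMem_Icc {s : ℝ} (hs₀ : s ≠ 0) (hs : |s| < 2) :
    -1 / s ∉ Icc (-(1 : ℝ) / 2) (1 / 2) := by
  rintro ⟨h₁, h₂⟩
  have hprod : -1 / s * s = -1 := div_mul_cancel₀ (-1) hs₀
  rcases abs_lt.mp hs with ⟨hs₁, hs₂⟩
  rcases hs₀.lt_or_gt with hneg | hpos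
  · nlinarith
  · nlinarith

lemma neg_one_div_add_int_notMem_Icc {x : ℝ} (hx : x ∈ Ioo (-(1 : ℝ) / 2) 0) {n : ℤ}
    (hn₁ : -2 < n) (hn₂ : n < 3) :
    -1 / (x + n) ∉ Icc (-(1 : ℝ) / 2) (1 / 2) := by
  obtain ⟨hx₁, hx₂⟩ := hx
  have hn₁' : (-1 : ℝ) ≤ n := by exact_mod_cast (by omega : (-1 : ℤ) ≤ n)
  have hn₂' : (n : ℝ) ≤ 2 := by exact_mod_cast (by omega : n ≤ 2)
  have hne : x + n ≠ 0 := by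
    rcases le_or_gt n 0 with hn | hn
    · have : (n : ℝ) ≤ 0 := by exact_mod_cast hn
      linarith
    · have : (1 : ℝ) ≤ n := by exact_mod_cast hn
      linarith
  exact neg_one_div_notMem_Icc hne (abs_lt.mpr ⟨by linarith, by linarith⟩)

/-- for `q = 3`, for every `x ∈ (-1/2, 0)`: the `f_3`-preimage set
of `x` in `I_3 ∖ {0}` equals `{-1/(x+n) : n ≥ 3 or n ≤ -2}`; moreover
`-1/(x+n) ∈ (-1/2, 0)` for `n ≥ 3`, `-1/(x+n) ∈ (0, 1/2)` for `n ≤ -2`, while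
`-1/(x+n) ∉ I_3` for `n ∈ {1, 2, -1}` and `-1/x ∉ I_3`. -/
theorem stmt13 :
    ∀ x ∈ Set.Ioo (-(1 : ℝ) / 2) 0,
      ({y : ℝ | y ∈ Set.Icc (-(1 : ℝ) / 2) (1 / 2) ∧ y ≠ 0 ∧ f3 y = x} =
        {y : ℝ | ∃ n : ℤ, (3 ≤ n ∨ n ≤ -2) ∧ y = -1 / (x + (n : ℝ))}) ∧
      (∀ n : ℤ, 3 ≤ n → -1 / (x + (n : ℝ)) ∈ Set.Ioo (-(1 : ℝ) / 2) 0) ∧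
      (∀ n : ℤ, n ≤ -2 → -1 / (x + (n : ℝ)) ∈ Set.Ioo (0 : ℝ) (1 / 2)) ∧
      (∀ n : ℤ, n = 1 ∨ n = 2 ∨ n = -1 →
        -1 / (x + (n : ℝ)) ∉ Set.Icc (-(1 : ℝ) / 2) (1 / 2)) ∧
      -1 / x ∉ Set.Icc (-(1 : ℝ) / 2) (1 / 2) := by
  rintro x ⟨hx₁, hx₂⟩
  have hnotMem : ∀ n : ℤ, -2 < n → n < 3 → -1 / (x + n) ∉ Icc (-(1 : ℝ) / 2) (1 / 2) :=
    fun n => neg_one_div_add_int_notMem_Icc ⟨hx₁, hx₂⟩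
  refine ⟨?_, fun n => neg_one_div_add_int_mem_Ioo_of_three_le hx₁,
    fun n => neg_one_div_add_int_mem_Ioo_of_le_neg_two hx₂, ?_, ?_⟩
  · ext y
    constructor
    · rintro ⟨hyI, hy₀, rfl⟩
      refine ⟨_, ?_, eq_neg_one_div_f3_add_mfloor hy₀⟩
      by_contra! hn
      rw [eq_neg_one_div_f3_add_mfloor hy₀] at hyI
      exact hnotMem _ hn.2 hn.1 hyI
    · rintro ⟨n, hn, rfl⟩
      have hI : -1 / (x + n) ∈ Icc (-(1 : ℝ) / 2) (1 / 2) ∧ -1 / (x + n) ≠ 0 := by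
        rcases hn with hn | hn
        · obtain ⟨h₁, h₂⟩ := neg_one_div_add_int_mem_Ioo_of_three_le hx₁ hn
          exact ⟨⟨h₁.le, by linarith⟩, h₂.ne⟩
        · obtain ⟨h₁, h₂⟩ := neg_one_div_add_int_mem_Ioo_of_le_neg_two hx₂ hn
          exact ⟨⟨by linarith, h₂.le⟩, h₁.ne'⟩
      have hne : x + n ≠ 0 := fun h => hI.2 (by rw [h, div_zero])
      exact ⟨hI.1, hI.2, f3_neg_one_div_add_int ⟨hx₁, by linarith⟩ hne⟩
  · rintro n (rfl | rfl | rfl) <;> exact hnotMem _ (by norm_num) (by norm_num)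
  · simpa using hnotMem 0 (by norm_num) (by norm_num)
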